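/- Let U ⊆ ℝⁿ be open with a metric g and an affine connection D given by Christoffel symbols Γ, let D* be the dual connection of D with respect to g, and let Ω be the Kähler form of (J^D, g̃^D) on TU = U × ℝⁿ. Then at every (x,ξ) ∈ TU and for all v, w, z ∈ ℝⁿ: dΩ(v^H, w^H, z^H) = g(x)(R^{D*}(x)(w,z)(v), ξ) + g(x)(R^{D*}(x)(z,v)(w), ξ) + g(x)(R^{D*}(x)(v,w)(z), ξ); dΩ(v^H, w^H, z^V) = g(x)(T^{D*}(x)(v,w), z); dΩ(v^H, w^V, z^V) = 0; and dΩ(v^V, w^V, z^V) = 0, where the lifts are taken at (x,ξ). -/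

import Mathlib

/-!
STATEMENT 3: the exterior derivative of the Kähler form Ω of (J^D, g̃^D) on
TU = U × ℝⁿ, evaluated on horizontal and vertical lifts.
-/

/-- Torsion of the connection with Christoffel symbols `Γ`. -/
noncomputable def torsion {n : ℕ}
    (Γ : (Fin n → ℝ) → (Fin n → ℝ) →L[ℝ] (Fin n → ℝ) →L[ℝ] (Fin n → ℝ))
    (x v w : Fin n → ℝ) : Fin n → ℝ :=
  Γ x v w - Γ x w v

/-- Curvature of the connection with Christoffel symbols `Γ`. -/
noncomputable def curv {n : ℕ}
    (Γ : (Fin n → ℝ) → (Fin n → ℝ) →L[ℝ] (Fin n → ℝ) →L[ℝ] (Fin n → ℝ))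
    (x v w z : Fin n → ℝ) : Fin n → ℝ :=
  fderiv ℝ Γ x v w z - fderiv ℝ Γ x w v z + Γ x v (Γ x w z) - Γ x w (Γ x v z)

/-- Horizontal lift of `v` at `(x,ξ)`: `v^H = (v, −Γ(x)(v)(ξ))`. -/
noncomputable def hor {n : ℕ}
    (Γ : (Fin n → ℝ) → (Fin n → ℝ) →L[ℝ] (Fin n → ℝ) →L[ℝ] (Fin n → ℝ))
    (x ξ v : Fin n → ℝ) : (Fin n → ℝ) × (Fin n → ℝ) :=
  (v, -(Γ x v ξ))

/-- Vertical lift of `v`: `v^V = (0, v)`. -/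
def ver {n : ℕ} (v : Fin n → ℝ) : (Fin n → ℝ) × (Fin n → ℝ) :=
  (0, v)

/-- The almost complex structure `J^D` (with `J^D(v^H) = v^V`, `J^D(v^V) = −v^H`). -/
noncomputable def Jstr {n : ℕ}
    (Γ : (Fin n → ℝ) → (Fin n → ℝ) →L[ℝ] (Fin n → ℝ) →L[ℝ] (Fin n → ℝ))
    (x ξ : Fin n → ℝ) (A : (Fin n → ℝ) × (Fin n → ℝ)) :
    (Fin n → ℝ) × (Fin n → ℝ) :=
  (-(A.2 + Γ x A.1 ξ), A.1 + Γ x (A.2 + Γ x A.1 ξ) ξ)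

/-- The Sasaki metric `g̃^D` at `(x,ξ)`. -/
noncomputable def sasaki {n : ℕ}
    (g : (Fin n → ℝ) → (Fin n → ℝ) →L[ℝ] (Fin n → ℝ) →L[ℝ] ℝ)
    (Γ : (Fin n → ℝ) → (Fin n → ℝ) →L[ℝ] (Fin n → ℝ) →L[ℝ] (Fin n → ℝ))
    (x ξ : Fin n → ℝ) (A B : (Fin n → ℝ) × (Fin n → ℝ)) : ℝ :=
  g x A.1 B.1 + g x (A.2 + Γ x A.1 ξ) (B.2 + Γ x B.1 ξ)

/-- The Kähler form `Ω(A,B) = g̃^D(J^D A, B)`. -/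
noncomputable def kform {n : ℕ}
    (g : (Fin n → ℝ) → (Fin n → ℝ) →L[ℝ] (Fin n → ℝ) →L[ℝ] ℝ)
    (Γ : (Fin n → ℝ) → (Fin n → ℝ) →L[ℝ] (Fin n → ℝ) →L[ℝ] (Fin n → ℝ))
    (x ξ : Fin n → ℝ) (A B : (Fin n → ℝ) × (Fin n → ℝ)) : ℝ :=
  sasaki g Γ x ξ (Jstr Γ x ξ A) B

/-- The exterior derivative of the 2-form Ω:
`dΩ(a)(u,v,w) = (fderiv Ω a u)(v,w) − (fderiv Ω a v)(u,w) + (fderiv Ω a w)(u,v)`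
(for constant arguments this agrees with differentiating the scalar functions
`a ↦ Ω(a)(·,·)`). -/
noncomputable def dkform {n : ℕ}
    (g : (Fin n → ℝ) → (Fin n → ℝ) →L[ℝ] (Fin n → ℝ) →L[ℝ] ℝ)
    (Γ : (Fin n → ℝ) → (Fin n → ℝ) →L[ℝ] (Fin n → ℝ) →L[ℝ] (Fin n → ℝ))
    (a : (Fin n → ℝ) × (Fin n → ℝ)) (A B C : (Fin n → ℝ) × (Fin n → ℝ)) : ℝ :=
  fderiv ℝ (fun p => kform g Γ p.1 p.2 B C) a A
    - fderiv ℝ (fun p => kform g Γ p.1 p.2 A C) a B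
    + fderiv ℝ (fun p => kform g Γ p.1 p.2 A B) a C

section Aux

variable {n : ℕ}

noncomputable abbrev instT1 (n : ℕ) : AddCommGroup ((Fin n → ℝ) →L[ℝ] ℝ) := inferInstance
noncomputable abbrev instT2 (n : ℕ) : AddCommGroup ((Fin n → ℝ) →L[ℝ] (Fin n → ℝ) →L[ℝ] ℝ) :=
  inferInstance
noncomputable abbrev instN1 (n : ℕ) : NormedAddCommGroup ((Fin n → ℝ) →L[ℝ] ℝ) := inferInstance
noncomputable abbrev instN2 (n : ℕ) :
    NormedAddCommGroup ((Fin n → ℝ) →L[ℝ] (Fin n → ℝ) →L[ℝ] ℝ) := inferInstance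
noncomputable abbrev instS1 (n : ℕ) : NormedSpace ℝ ((Fin n → ℝ) →L[ℝ] ℝ) := inferInstance
noncomputable abbrev instS2 (n : ℕ) :
    NormedSpace ℝ ((Fin n → ℝ) →L[ℝ] (Fin n → ℝ) →L[ℝ] ℝ) := inferInstance
noncomputable abbrev instT3 (n : ℕ) : AddCommGroup ((Fin n → ℝ) →L[ℝ] (Fin n → ℝ)) := inferInstance
noncomputable abbrev instT4 (n : ℕ) :
    AddCommGroup ((Fin n → ℝ) →L[ℝ] (Fin n → ℝ) →L[ℝ] (Fin n → ℝ)) := inferInstance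
noncomputable abbrev instN3 (n : ℕ) : NormedAddCommGroup ((Fin n → ℝ) →L[ℝ] (Fin n → ℝ)) :=
  inferInstance
noncomputable abbrev instN4 (n : ℕ) :
    NormedAddCommGroup ((Fin n → ℝ) →L[ℝ] (Fin n → ℝ) →L[ℝ] (Fin n → ℝ)) := inferInstance
noncomputable abbrev instS3 (n : ℕ) : NormedSpace ℝ ((Fin n → ℝ) →L[ℝ] (Fin n → ℝ)) :=
  inferInstance
noncomputable abbrev instS4 (n : ℕ) :
    NormedSpace ℝ ((Fin n → ℝ) →L[ℝ] (Fin n → ℝ) →L[ℝ] (Fin n → ℝ)) := inferInstance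

attribute [local instance] instT1 instT2 instN1 instN2 instS1 instS2 instT3 instT4 instN3 instN4 instS3 instS4

lemma kform_eq
    (g : (Fin n → ℝ) → (Fin n → ℝ) →L[ℝ] (Fin n → ℝ) →L[ℝ] ℝ)
    (Γ : (Fin n → ℝ) → (Fin n → ℝ) →L[ℝ] (Fin n → ℝ) →L[ℝ] (Fin n → ℝ))
    (y η : Fin n → ℝ) (A B : (Fin n → ℝ) × (Fin n → ℝ)) :
    kform g Γ y η A B
      = g y A.1 B.2 - g y A.2 B.1 + g y A.1 (Γ y B.1 η) - g y (Γ y A.1 η) B.1 := by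
  simp [kform, sasaki, Jstr, map_add, map_neg, map_sub]
  ring

set_option maxHeartbeats 1000000 in
lemma key_fderiv
    (g : (Fin n → ℝ) → (Fin n → ℝ) →L[ℝ] (Fin n → ℝ) →L[ℝ] ℝ)
    (Γ : (Fin n → ℝ) → (Fin n → ℝ) →L[ℝ] (Fin n → ℝ) →L[ℝ] (Fin n → ℝ))
    (x ξ : Fin n → ℝ)
    (hgx : HasFDerivAt g (fderiv ℝ g x) x)
    (hΓx : HasFDerivAt Γ (fderiv ℝ Γ x) x)
    (A B V : (Fin n → ℝ) × (Fin n → ℝ)) :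
    fderiv ℝ (fun p : (Fin n → ℝ) × (Fin n → ℝ) => kform g Γ p.1 p.2 A B) (x, ξ) V
      = fderiv ℝ g x V.1 A.1 B.2 - fderiv ℝ g x V.1 A.2 B.1
        + fderiv ℝ g x V.1 A.1 (Γ x B.1 ξ) + g x A.1 (fderiv ℝ Γ x V.1 B.1 ξ)
        + g x A.1 (Γ x B.1 V.2) - fderiv ℝ g x V.1 (Γ x A.1 ξ) B.1
        - g x (fderiv ℝ Γ x V.1 A.1 ξ) B.1 - g x (Γ x A.1 V.2) B.1 := by
  have hG : HasFDerivAt (fun p : (Fin n → ℝ) × (Fin n → ℝ) => g p.1)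
      ((fderiv ℝ g x).comp (ContinuousLinearMap.fst ℝ _ _)) (x, ξ) :=
    hgx.comp (x, ξ) (hasFDerivAt_fst)
  have hC : HasFDerivAt (fun p : (Fin n → ℝ) × (Fin n → ℝ) => Γ p.1)
      ((fderiv ℝ Γ x).comp (ContinuousLinearMap.fst ℝ _ _)) (x, ξ) :=
    hΓx.comp (x, ξ) (hasFDerivAt_fst)
  have h1 := (hG.clm_apply (hasFDerivAt_const A.1 _)).clm_apply (hasFDerivAt_const B.2 _)
  have h2 := (hG.clm_apply (hasFDerivAt_const A.2 _)).clm_apply (hasFDerivAt_const B.1 _)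
  have hin3 := (hC.clm_apply (hasFDerivAt_const B.1 _)).clm_apply (hasFDerivAt_snd)
  have h3 := (hG.clm_apply (hasFDerivAt_const A.1 _)).clm_apply hin3
  have hin4 := (hC.clm_apply (hasFDerivAt_const A.1 _)).clm_apply (hasFDerivAt_snd)
  have h4 := (hG.clm_apply hin4).clm_apply (hasFDerivAt_const B.1 _)
  have hbig : HasFDerivAt (fun p : (Fin n → ℝ) × (Fin n → ℝ) => g p.1 A.1 B.2 - g p.1 A.2 B.1
      + g p.1 A.1 (Γ p.1 B.1 p.2) - g p.1 (Γ p.1 A.1 p.2) B.1) _ (x, ξ) :=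
    ((h1.sub h2).add h3).sub h4
  have heq : (fun p : (Fin n → ℝ) × (Fin n → ℝ) => kform g Γ p.1 p.2 A B)
      = fun p => g p.1 A.1 B.2 - g p.1 A.2 B.1 + g p.1 A.1 (Γ p.1 B.1 p.2)
          - g p.1 (Γ p.1 A.1 p.2) B.1 := funext fun p => kform_eq g Γ p.1 p.2 A B
  rw [heq, hbig.fderiv]
  simp [ContinuousLinearMap.add_apply, ContinuousLinearMap.comp_apply,
    ContinuousLinearMap.flip_apply, ContinuousLinearMap.sub_apply]
  ring

set_option maxHeartbeats 1000000 in
lemma ddual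
    (g : (Fin n → ℝ) → (Fin n → ℝ) →L[ℝ] (Fin n → ℝ) →L[ℝ] ℝ)
    (Γ Γs : (Fin n → ℝ) → (Fin n → ℝ) →L[ℝ] (Fin n → ℝ) →L[ℝ] (Fin n → ℝ))
    (x : Fin n → ℝ)
    (hgx : HasFDerivAt g (fderiv ℝ g x) x)
    (hΓx : HasFDerivAt Γ (fderiv ℝ Γ x) x)
    (hΓsx : HasFDerivAt Γs (fderiv ℝ Γs x) x)
    (hg2x : HasFDerivAt (fderiv ℝ g) (fderiv ℝ (fderiv ℝ g) x) x)
    (v0 a c : Fin n → ℝ)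
    (hev : (fun y => fderiv ℝ g y v0 a c)
        =ᶠ[nhds x] (fun y => g y (Γs y v0 a) c + g y a (Γ y v0 c)))
    (u : Fin n → ℝ) :
    fderiv ℝ (fderiv ℝ g) x u v0 a c
      = fderiv ℝ g x u (Γs x v0 a) c + g x (fderiv ℝ Γs x u v0 a) c
        + fderiv ℝ g x u a (Γ x v0 c) + g x a (fderiv ℝ Γ x u v0 c) := by
  have hφ := ((hg2x.clm_apply (hasFDerivAt_const (𝕜 := ℝ) v0 x)).clm_apply
      (hasFDerivAt_const (𝕜 := ℝ) a x)).clm_apply (hasFDerivAt_const (𝕜 := ℝ) c x)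
  have hψ1 := (hgx.clm_apply ((hΓsx.clm_apply (hasFDerivAt_const (𝕜 := ℝ) v0 x)).clm_apply
      (hasFDerivAt_const (𝕜 := ℝ) a x))).clm_apply (hasFDerivAt_const (𝕜 := ℝ) c x)
  have hψ2 := (hgx.clm_apply (hasFDerivAt_const (𝕜 := ℝ) a x)).clm_apply
      ((hΓx.clm_apply (hasFDerivAt_const (𝕜 := ℝ) v0 x)).clm_apply (hasFDerivAt_const (𝕜 := ℝ) c x))
  have hψ : HasFDerivAt (fun y => g y (Γs y v0 a) c + g y a (Γ y v0 c)) _ x := hψ1.add hψ2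
  have h : fderiv ℝ (fun y => fderiv ℝ g y v0 a c) x
      = fderiv ℝ (fun y => g y (Γs y v0 a) c + g y a (Γ y v0 c)) x := hev.fderiv_eq
  rw [hφ.fderiv, hψ.fderiv] at h
  have h2 := DFunLike.congr_fun h u
  simp at h2
  linarith [h2]

end Aux

set_option maxHeartbeats 4000000 in
set_option synthInstance.maxHeartbeats 400000 in
theorem statement3 (n : ℕ) (hn : 1 ≤ n) (U : Set (Fin n → ℝ)) (hU : IsOpen U)
    (g : (Fin n → ℝ) → (Fin n → ℝ) →L[ℝ] (Fin n → ℝ) →L[ℝ] ℝ)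
    (hg : ContDiffOn ℝ (⊤ : ℕ∞) g U)
    (hgsymm : ∀ x ∈ U, ∀ v w : Fin n → ℝ, g x v w = g x w v)
    (hgpos : ∀ x ∈ U, ∀ v : Fin n → ℝ, v ≠ 0 → 0 < g x v v)
    (Γ : (Fin n → ℝ) → (Fin n → ℝ) →L[ℝ] (Fin n → ℝ) →L[ℝ] (Fin n → ℝ))
    (hΓ : ContDiffOn ℝ (⊤ : ℕ∞) Γ U)
    -- the dual connection D* with Christoffel symbols Γs
    (Γs : (Fin n → ℝ) → (Fin n → ℝ) →L[ℝ] (Fin n → ℝ) →L[ℝ] (Fin n → ℝ))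
    (hΓs : ContDiffOn ℝ (⊤ : ℕ∞) Γs U)
    (hdual : ∀ x ∈ U, ∀ v y z : Fin n → ℝ,
      fderiv ℝ g x v y z = g x (Γs x v y) z + g x y (Γ x v z)) :
    ∀ x ∈ U, ∀ ξ : Fin n → ℝ, ∀ v w z : Fin n → ℝ,
      dkform g Γ (x, ξ) (hor Γ x ξ v) (hor Γ x ξ w) (hor Γ x ξ z)
          = g x (curv Γs x w z v) ξ + g x (curv Γs x z v w) ξ
            + g x (curv Γs x v w z) ξ
      ∧ dkform g Γ (x, ξ) (hor Γ x ξ v) (hor Γ x ξ w) (ver z)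
          = g x (torsion Γs x v w) z
      ∧ dkform g Γ (x, ξ) (hor Γ x ξ v) (ver w) (ver z) = 0
      ∧ dkform g Γ (x, ξ) (ver v) (ver w) (ver z) = 0 := by
  letI := instT1 n
  letI := instT2 n
  letI := instN1 n
  letI := instN2 n
  letI := instS1 n
  letI := instS2 n
  letI := instT3 n
  letI := instT4 n
  letI := instN3 n
  letI := instN4 n
  letI := instS3 n
  letI := instS4 n
  intro x hx ξ v w z
  have hmem : U ∈ nhds x := hU.mem_nhds hx
  have hgx : HasFDerivAt g (fderiv ℝ g x) x :=
    ((hg.contDiffAt hmem).differentiableAt (by simp)).hasFDerivAt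
  have hΓx : HasFDerivAt Γ (fderiv ℝ Γ x) x :=
    ((hΓ.contDiffAt hmem).differentiableAt (by simp)).hasFDerivAt
  have hΓsx : HasFDerivAt Γs (fderiv ℝ Γs x) x :=
    ((hΓs.contDiffAt hmem).differentiableAt (by simp)).hasFDerivAt
  have hg2x : HasFDerivAt (fderiv ℝ g) (fderiv ℝ (fderiv ℝ g) x) x :=
    ((((hg.contDiffAt hmem).fderiv_right (m := (⊤ : ℕ∞)) ((by simp))).differentiableAt (by simp))).hasFDerivAt
  have hsym : ∀ u u' : Fin n → ℝ,
      fderiv ℝ (fderiv ℝ g) x u u' = fderiv ℝ (fderiv ℝ g) x u' u := by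
    intro u u'
    refine second_derivative_symmetric_of_eventually (f := g) ?_ hg2x u u'
    filter_upwards [hU.mem_nhds hx] with y hy
    exact ((hg.contDiffAt (hU.mem_nhds hy)).differentiableAt (by simp)).hasFDerivAt
  have hdd : ∀ v0 a c u : Fin n → ℝ,
      fderiv ℝ (fderiv ℝ g) x u v0 a c
        = fderiv ℝ g x u (Γs x v0 a) c + g x (fderiv ℝ Γs x u v0 a) c
          + fderiv ℝ g x u a (Γ x v0 c) + g x a (fderiv ℝ Γ x u v0 c) := by
    intro v0 a c u
    refine ddual g Γ Γs x hgx hΓx hΓsx hg2x v0 a c ?_ u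
    filter_upwards [hU.mem_nhds hx] with y hy
    exact hdual y hy v0 a c
  have star2 : ∀ u v0 a : Fin n → ℝ,
      g x (curv Γs x u v0 a) ξ = -(g x a (curv Γ x u v0 ξ)) := by
    intro u v0 a
    have h1 := hdd v0 a ξ u
    have h2 := hdd u a ξ v0
    have h3 : fderiv ℝ (fderiv ℝ g) x u v0 a ξ = fderiv ℝ (fderiv ℝ g) x v0 u a ξ := by
      rw [hsym u v0]
    simp only [curv, map_sub, map_add, ContinuousLinearMap.sub_apply,
      ContinuousLinearMap.add_apply]
    linarith [h1, h2, h3, hdual x hx u (Γs x v0 a) ξ, hdual x hx v0 (Γs x u a) ξ,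
      hdual x hx u a (Γ x v0 ξ), hdual x hx v0 a (Γ x u ξ)]
  have K := key_fderiv g Γ x ξ hgx hΓx
  refine ⟨?_, ?_, ?_, ?_⟩
  · rw [star2 w z v, star2 z v w, star2 v w z]
    simp only [dkform, K, hor, ver, curv, map_sub, map_add, map_neg, map_zero,
      ContinuousLinearMap.sub_apply, ContinuousLinearMap.add_apply,
      ContinuousLinearMap.neg_apply, ContinuousLinearMap.zero_apply]
    linarith [hgsymm x hx (fderiv ℝ Γ x v w ξ) z, hgsymm x hx (fderiv ℝ Γ x w v ξ) z,
      hgsymm x hx (fderiv ℝ Γ x z v ξ) w, hgsymm x hx (Γ x w (Γ x v ξ)) z,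
      hgsymm x hx (Γ x v (Γ x w ξ)) z, hgsymm x hx (Γ x v (Γ x z ξ)) w]
  · simp only [dkform, K, hor, ver, torsion, map_sub, map_add, map_neg, map_zero,
      ContinuousLinearMap.sub_apply, ContinuousLinearMap.add_apply,
      ContinuousLinearMap.neg_apply, ContinuousLinearMap.zero_apply]
    linarith [hdual x hx v w z, hdual x hx w v z, hgsymm x hx (Γ x v z) w]
  · simp only [dkform, K, hor, ver, map_sub, map_add, map_neg, map_zero,
      ContinuousLinearMap.sub_apply, ContinuousLinearMap.add_apply,
      ContinuousLinearMap.neg_apply, ContinuousLinearMap.zero_apply]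
    ring
  · simp only [dkform, K, hor, ver, map_sub, map_add, map_neg, map_zero,
      ContinuousLinearMap.sub_apply, ContinuousLinearMap.add_apply,
      ContinuousLinearMap.neg_apply, ContinuousLinearMap.zero_apply]
    ring
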